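/- With f⋆ = min f on the torus, c ∈ ℝ, g a nonnegative periodic function, u = f − c − g, λ̂ a strictly positive probability distribution on ℤᵈ, and Ŝ = (1/N)Σ_{i=1}^N |û_{ω_i}|/λ̂_{ω_i} for i.i.d. samples ω_i ∼ λ̂, we have with probability at least 1−δ: f⋆ ≥ c − Ŝ − ‖f − c − g‖_{H_λ}/√(Nδ). -/

import Mathlib

/-! Writing `u = f - c - g`, at every point `f x = c + g x + Re Σ û_ω e_ω(x) ≥ c - Σ |û_ω|`,
since `g ≥ 0` and the characters `e_ω` have modulus one. For `W ∼ λ̂`, the variable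
`|û_W| / λ̂_W` has mean `Σ |û_ω|` and second moment `‖u‖²_{H_λ}`, so Chebyshev's inequality for
the average `Ŝ` of `N` independent copies gives `Σ |û_ω| ≤ Ŝ + ‖u‖_{H_λ} / √(Nδ)` outside an
event of probability `δ`. -/

open scoped BigOperators ProbabilityTheory
open MeasureTheory ProbabilityTheory

section TorusFourier

variable {d : ℕ}

noncomputable def torusFourierChar (ω : Fin d → ℤ) (x : Fin d → ℝ) : ℂ :=
  Complex.exp (2 * Real.pi * Complex.I * ∑ i, (ω i : ℂ) * (x i : ℂ))

lemma norm_torusFourierChar (ω : Fin d → ℤ) (x : Fin d → ℝ) : ‖torusFourierChar ω x‖ = 1 := by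
  rw [torusFourierChar, Complex.norm_exp]
  simp

@[simp]
lemma torusFourierChar_zero_left (x : Fin d → ℝ) : torusFourierChar 0 x = 1 := by
  simp [torusFourierChar]

lemma summable_mul_torusFourierChar {a : (Fin d → ℤ) → ℂ} (ha : Summable fun ω => ‖a ω‖)
    (x : Fin d → ℝ) : Summable fun ω => a ω * torusFourierChar ω x :=
  .of_norm <| by simpa [norm_torusFourierChar] using ha

lemma summable_norm_sub_ite_sub {fc gc : (Fin d → ℤ) → ℂ} (hfsum : Summable fun ω => ‖fc ω‖)
    (hgsum : Summable fun ω => ‖gc ω‖) (c : ℂ) :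
    Summable fun ω => ‖fc ω - (if ω = 0 then c else 0) - gc ω‖ :=
  summable_norm_iff.2 <| (hfsum.of_norm.sub (hasSum_ite_eq 0 c).summable).sub hgsum.of_norm

lemma neg_tsum_norm_le_re_tsum_mul_torusFourierChar {a : (Fin d → ℤ) → ℂ}
    (ha : Summable fun ω => ‖a ω‖) (x : Fin d → ℝ) :
    -∑' ω, ‖a ω‖ ≤ (∑' ω, a ω * torusFourierChar ω x).re := by
  have hnorm : ‖∑' ω, a ω * torusFourierChar ω x‖ ≤ ∑' ω, ‖a ω‖ := by
    simpa [norm_torusFourierChar] using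
      norm_tsum_le_tsum_norm (summable_mul_torusFourierChar ha x).norm
  linarith [neg_abs_le (∑' ω, a ω * torusFourierChar ω x).re,
    Complex.abs_re_le_norm (∑' ω, a ω * torusFourierChar ω x)]

theorem sub_tsum_norm_le_of_nonneg {f g : (Fin d → ℝ) → ℝ} {fc gc u : (Fin d → ℤ) → ℂ} {c : ℝ}
    (hf : ∀ x, (f x : ℂ) = ∑' ω, fc ω * torusFourierChar ω x) (hfsum : Summable fun ω => ‖fc ω‖)
    (hg : ∀ x, (g x : ℂ) = ∑' ω, gc ω * torusFourierChar ω x) (hgsum : Summable fun ω => ‖gc ω‖)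
    (hgnonneg : ∀ x, 0 ≤ g x) (hu : ∀ ω, u ω = fc ω - (if ω = 0 then (c : ℂ) else 0) - gc ω)
    (x : Fin d → ℝ) :
    c - ∑' ω, ‖u ω‖ ≤ f x := by
  have husum : Summable fun ω => ‖u ω‖ := by
    simpa only [hu] using summable_norm_sub_ite_sub hfsum hgsum (c : ℂ)
  have hconst : HasSum (fun ω => (if ω = 0 then (c : ℂ) else 0) * torusFourierChar ω x) c := by
    convert hasSum_ite_eq (0 : Fin d → ℤ) (c : ℂ) using 1
    ext ω
    split_ifs with h <;> simp [h]
  have hexpand : ∑' ω, u ω * torusFourierChar ω x = f x - c - g x := by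
    have hsum := ((summable_mul_torusFourierChar hfsum x).hasSum.sub hconst).sub
      (summable_mul_torusFourierChar hgsum x).hasSum
    rw [← hf, ← hg] at hsum
    simpa only [hu, sub_mul] using hsum.tsum_eq
  have hre := neg_tsum_norm_le_re_tsum_mul_torusFourierChar husum x
  rw [hexpand] at hre
  simp only [Complex.sub_re, Complex.ofReal_re] at hre
  linarith [hgnonneg x]

end TorusFourier

section DiscreteLaw

variable {Ω S : Type*} [MeasurableSpace Ω] {μ : Measure Ω} [MeasurableSpace S]
  [MeasurableSingletonClass S] {W : Ω → S} {p : S → ℝ}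

lemma map_apply_singleton_of_law (hW : Measurable W)
    (hlaw : ∀ s, μ (W ⁻¹' {s}) = ENNReal.ofReal (p s)) (s : S) :
    μ.map W {s} = ENNReal.ofReal (p s) := by
  rw [Measure.map_apply hW (measurableSet_singleton s), hlaw]

lemma integrable_comp_of_summable [Countable S] (hW : Measurable W) (hp : ∀ s, 0 ≤ p s)
    (hlaw : ∀ s, μ (W ⁻¹' {s}) = ENNReal.ofReal (p s)) {φ : S → ℝ}
    (hφ : Summable fun s => |φ s| * p s) : Integrable (fun ω => φ (W ω)) μ := by
  have hφm := (measurable_of_countable φ).aestronglyMeasurable (μ := μ.map W)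
  refine (integrable_map_measure hφm hW.aemeasurable).1 ⟨hφm, ?_⟩
  rw [HasFiniteIntegral, lintegral_countable']
  simp_rw [map_apply_singleton_of_law hW hlaw, Real.enorm_eq_ofReal_abs,
    ← ENNReal.ofReal_mul (abs_nonneg _)]
  rw [← ENNReal.ofReal_tsum_of_nonneg (fun s => mul_nonneg (abs_nonneg _) (hp s)) hφ]
  exact ENNReal.ofReal_lt_top

lemma integral_comp_eq_tsum [Countable S] (hW : Measurable W) (hp : ∀ s, 0 ≤ p s)
    (hlaw : ∀ s, μ (W ⁻¹' {s}) = ENNReal.ofReal (p s)) {φ : S → ℝ}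
    (hφ : Summable fun s => |φ s| * p s) : ∫ ω, φ (W ω) ∂μ = ∑' s, φ s * p s := by
  have hφm := (measurable_of_countable φ).aestronglyMeasurable (μ := μ.map W)
  rw [← integral_map hW.aemeasurable hφm, integral_countable
    ((integrable_map_measure hφm hW.aemeasurable).2 (integrable_comp_of_summable hW hp hlaw hφ))]
  refine tsum_congr fun s => ?_
  rw [measureReal_def, map_apply_singleton_of_law hW hlaw, ENNReal.toReal_ofReal (hp s),
    smul_eq_mul, mul_comm]

end DiscreteLaw

lemma div_sq_mul_self {a b : ℝ} (hb : b ≠ 0) : (a / b) ^ 2 * b = a ^ 2 / b := by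
  rw [div_pow, sq b, div_mul_eq_mul_div, mul_div_mul_right _ _ hb]

section ImportanceSampling

variable {Ω S E : Type*} [MeasurableSpace Ω] {μ : Measure Ω} [MeasurableSpace S]
  [MeasurableSingletonClass S] [Countable S] [NormedAddCommGroup E] {W : Ω → S} {p : S → ℝ}
  {u : S → E}

lemma integral_norm_div_comp (hW : Measurable W) (hp : ∀ s, 0 < p s)
    (hlaw : ∀ s, μ (W ⁻¹' {s}) = ENNReal.ofReal (p s)) (hu : Summable fun s => ‖u s‖) :
    ∫ ω, ‖u (W ω)‖ / p (W ω) ∂μ = ∑' s, ‖u s‖ := by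
  have hcancel : ∀ s, ‖u s‖ / p s * p s = ‖u s‖ := fun s => div_mul_cancel₀ _ (hp s).ne'
  have hsum : Summable fun s => |‖u s‖ / p s| * p s := by
    simpa only [abs_div, abs_norm, abs_of_pos (hp _), hcancel] using hu
  rw [integral_comp_eq_tsum hW (fun s => (hp s).le) hlaw hsum, tsum_congr hcancel]

lemma memLp_two_norm_div_comp (hW : Measurable W) (hp : ∀ s, 0 < p s)
    (hlaw : ∀ s, μ (W ⁻¹' {s}) = ENNReal.ofReal (p s))
    (hu : Summable fun s => ‖u s‖ ^ 2 / p s) :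
    MemLp (fun ω => ‖u (W ω)‖ / p (W ω)) 2 μ := by
  have hsum : Summable fun s => |(‖u s‖ / p s) ^ 2| * p s := by
    simpa only [abs_sq] using hu.congr fun s => (div_sq_mul_self (hp s).ne').symm
  have hmeas : AEStronglyMeasurable (fun ω => ‖u (W ω)‖ / p (W ω)) μ :=
    ((measurable_of_countable fun s => ‖u s‖ / p s).comp hW).aestronglyMeasurable
  exact (memLp_two_iff_integrable_sq hmeas).2
    (integrable_comp_of_summable hW (fun s => (hp s).le) hlaw hsum)

lemma variance_norm_div_comp_le [IsProbabilityMeasure μ] (hW : Measurable W)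
    (hp : ∀ s, 0 < p s) (hlaw : ∀ s, μ (W ⁻¹' {s}) = ENNReal.ofReal (p s))
    (hu : Summable fun s => ‖u s‖ ^ 2 / p s) :
    Var[fun ω => ‖u (W ω)‖ / p (W ω); μ] ≤ ∑' s, ‖u s‖ ^ 2 / p s := by
  have hsum : Summable fun s => |(‖u s‖ / p s) ^ 2| * p s := by
    simpa only [abs_sq] using hu.congr fun s => (div_sq_mul_self (hp s).ne').symm
  refine (variance_le_expectation_sq (memLp_two_norm_div_comp hW hp hlaw hu).1).trans_eq ?_
  rw [← tsum_congr fun s => div_sq_mul_self (hp s).ne',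
    ← integral_comp_eq_tsum hW (fun s => (hp s).le) hlaw hsum]
  rfl

end ImportanceSampling

section Chebyshev

variable {Ω : Type*} [MeasurableSpace Ω] {μ : Measure Ω} [IsProbabilityMeasure μ]

lemma ofReal_one_sub_le_of_measure_compl_le {s : Set Ω} {δ : ℝ} (hδ : 0 ≤ δ)
    (h : μ sᶜ ≤ ENNReal.ofReal δ) : ENNReal.ofReal (1 - δ) ≤ μ s :=
  calc ENNReal.ofReal (1 - δ) = 1 - ENNReal.ofReal δ := by
        rw [ENNReal.ofReal_sub _ hδ, ENNReal.ofReal_one]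
    _ ≤ 1 - μ sᶜ := tsub_le_tsub_left h 1
    _ ≤ μ s := tsub_le_iff_right.2 <| by simpa using measure_univ_le_add_compl (μ := μ) s

theorem ofReal_one_sub_le_measure_integral_sub_le {Y : Ω → ℝ} (hY : MemLp Y 2 μ) {δ : ℝ}
    (hδ : 0 < δ) : ENNReal.ofReal (1 - δ) ≤ μ {ω | μ[Y] - √(Var[Y; μ] / δ) ≤ Y ω} := by
  refine ofReal_one_sub_le_of_measure_compl_le hδ.le ?_
  rcases (variance_nonneg Y μ).eq_or_lt with hvar | hvar
  · have hae : ∀ᵐ ω ∂μ, μ[Y] - √(Var[Y; μ] / δ) ≤ Y ω := by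
      filter_upwards [ae_eq_integral_of_variance_eq_zero hY hvar.symm] with ω hω
      rw [hω]
      exact sub_le_self _ (Real.sqrt_nonneg _)
    rw [Set.compl_ofPred, ae_iff.1 hae]
    exact bot_le
  · set t := √(Var[Y; μ] / δ)
    have ht : 0 < t := Real.sqrt_pos.2 (div_pos hvar hδ)
    calc μ {ω | μ[Y] - t ≤ Y ω}ᶜ ≤ μ {ω | t ≤ |Y ω - μ[Y]|} := measure_mono fun ω hω => by
          simp only [Set.mem_compl_iff, Set.mem_ofPred_eq, not_le] at hω ⊢
          rw [abs_sub_comm]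
          exact (le_abs_self _).trans' (by linarith)
      _ ≤ ENNReal.ofReal (Var[Y; μ] / t ^ 2) := meas_ge_le_variance_div_sq hY ht
      _ = ENNReal.ofReal δ := by
          rw [Real.sq_sqrt (div_nonneg hvar.le hδ.le), div_div_cancel₀ hvar.ne']

theorem ofReal_one_sub_le_measure_sub_le_mean {ι : Type*} [Fintype ι] [Nonempty ι]
    {X : ι → Ω → ℝ} (hX : ∀ i, MemLp (X i) 2 μ) (hindep : Pairwise fun i j => X i ⟂ᵢ[μ] X j)
    {m V : ℝ} (hmean : ∀ i, μ[X i] = m) (hvar : ∀ i, Var[X i; μ] ≤ V) {δ : ℝ} (hδ : 0 < δ) :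
    ENNReal.ofReal (1 - δ) ≤
      μ {ω | m - √V / √(Fintype.card ι * δ) ≤ (1 / (Fintype.card ι : ℝ)) * ∑ i, X i ω} := by
  set n : ℝ := (Fintype.card ι : ℝ) with hn_def
  have hn : 0 < n := by simp [n, Fintype.card_pos]
  set Y : Ω → ℝ := fun ω => (1 / n) * ∑ i, X i ω
  have hYmem : MemLp Y 2 μ := (memLp_finsetSum _ fun i _ => hX i).const_mul _
  have hYmean : μ[Y] = m := by
    simp only [Y, integral_const_mul, integral_finsetSum _ fun i _ => (hX i).integrable one_le_two,
      hmean, Finset.sum_const, Finset.card_univ, nsmul_eq_mul, ← hn_def]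
    field_simp
  have hYvar : Var[Y; μ] ≤ V / n := by
    have hsum : Var[fun ω => ∑ i, X i ω; μ] = ∑ i, Var[X i; μ] := by
      rw [← IndepFun.variance_sum (fun i _ => hX i) fun i _ j _ hij => hindep hij]
      congr 1
      ext ω
      simp
    calc Var[Y; μ] = (1 / n) ^ 2 * ∑ i, Var[X i; μ] := by rw [variance_const_mul, hsum]
      _ ≤ (1 / n) ^ 2 * ∑ _i : ι, V := by gcongr with i; exact hvar i
      _ = V / n := by
          simp only [Finset.sum_const, Finset.card_univ, nsmul_eq_mul, ← hn_def]
          field_simp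
  refine (ofReal_one_sub_le_measure_integral_sub_le hYmem hδ).trans (measure_mono fun ω hω => ?_)
  simp only [Set.mem_ofPred_eq, hYmean] at hω ⊢
  have hsqrt : √(Var[Y; μ] / δ) ≤ √V / √(n * δ) := by
    rw [← Real.sqrt_div' _ (mul_pos hn hδ).le]
    refine Real.sqrt_le_sqrt ?_
    calc Var[Y; μ] / δ ≤ V / n / δ := by gcongr
      _ = V / (n * δ) := div_div _ _ _
  exact le_trans (by linarith) hω

end Chebyshev

theorem stmt5 {d : ℕ} (f : (Fin d → ℝ) → ℝ) (fc : (Fin d → ℤ) → ℂ)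
    (hf : ∀ x, (f x : ℂ) = ∑' ω : Fin d → ℤ, fc ω *
      Complex.exp (2 * Real.pi * Complex.I * ∑ i, (ω i : ℂ) * (x i : ℂ)))
    (hfsum : Summable fun ω => ‖fc ω‖)
    (g : (Fin d → ℝ) → ℝ) (gc : (Fin d → ℤ) → ℂ)
    (hg : ∀ x, (g x : ℂ) = ∑' ω : Fin d → ℤ, gc ω *
      Complex.exp (2 * Real.pi * Complex.I * ∑ i, (ω i : ℂ) * (x i : ℂ)))
    (hgsum : Summable fun ω => ‖gc ω‖)
    (hgnonneg : ∀ x, 0 ≤ g x)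
    (c : ℝ) (xstar : Fin d → ℝ)
    (lam : (Fin d → ℤ) → ℝ) (hpos : ∀ s, 0 < lam s)
    (uc : (Fin d → ℤ) → ℂ)
    (huc : uc = fun ω => fc ω - (if ω = 0 then (c : ℂ) else 0) - gc ω)
    (hHsum : Summable fun s => ‖uc s‖ ^ 2 / lam s)
    {Ω : Type} [MeasureSpace Ω] [IsProbabilityMeasure (ℙ : Measure Ω)]
    (N : ℕ) (hN : 0 < N) (W : Fin N → Ω → (Fin d → ℤ))
    (hmeas : ∀ i, Measurable (W i))
    (hindep : ProbabilityTheory.iIndepFun W ℙ)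
    (hlaw : ∀ i s, ℙ (W i ⁻¹' {s}) = ENNReal.ofReal (lam s))
    (δ : ℝ) (hδ : δ ∈ Set.Ioo (0:ℝ) 1) :
    ENNReal.ofReal (1 - δ) ≤
      ℙ {a | c - (1 / (N : ℝ)) * (∑ i, ‖uc (W i a)‖ / lam (W i a))
        - Real.sqrt (∑' s, ‖uc s‖ ^ 2 / lam s) / Real.sqrt (N * δ) ≤ f xstar} := by
  have : Nonempty (Fin N) := ⟨⟨0, hN⟩⟩
  have husum : Summable fun s => ‖uc s‖ := huc ▸ summable_norm_sub_ite_sub hfsum hgsum (c : ℂ)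
  have hpair : Pairwise fun i j =>
      (fun a => ‖uc (W i a)‖ / lam (W i a)) ⟂ᵢ (fun a => ‖uc (W j a)‖ / lam (W j a)) :=
    fun i j hij => (hindep.indepFun hij).comp (measurable_of_countable fun s => ‖uc s‖ / lam s)
      (measurable_of_countable fun s => ‖uc s‖ / lam s)
  refine (ofReal_one_sub_le_measure_sub_le_mean
    (fun i => memLp_two_norm_div_comp (hmeas i) hpos (hlaw i) hHsum) hpair
    (fun i => integral_norm_div_comp (hmeas i) hpos (hlaw i) husum)
    (fun i => variance_norm_div_comp_le (hmeas i) hpos (hlaw i) hHsum) hδ.1).trans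
    (measure_mono fun a ha => ?_)
  have hdet := sub_tsum_norm_le_of_nonneg hf hfsum hg hgsum hgnonneg (congrFun huc) xstar
  simp only [Set.mem_ofPred_eq, Fintype.card_fin] at ha ⊢
  linarith
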